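/- Let S = {S_i}_{i∈E} be a rotation-free similarity IFS on ℝ^d satisfying the strong open set condition with open set O, and let w ∈ E^* be a nonempty finite word whose fixed point x_w of S_w lies in O. Set X := closure(O). Then there exist n₀ ∈ ℕ and c₀ > 0 such that for every m ≥ 0, dist(S_{w^{m+n₀}}(X), ∂(S_{w^m}(X))) ≥ c₀ · diam(S_{w^m}(X)), where ∂ denotes the topological boundary. -/

import Mathlib

open MeasureTheory Metric Set Filter
open scoped ENNReal Topology NNReal

noncomputable section

/-- Euclidean space `ℝ^d`. -/
abbrev Euc (d : ℕ) := EuclideanSpace ℝ (Fin d)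

/-- Composition `S_w = S_{w_1} ∘ ⋯ ∘ S_{w_n}` along a finite word. -/
def Sw {d N : ℕ} (S : Fin N → Euc d → Euc d) : List (Fin N) → Euc d → Euc d
  | [] => id
  | i :: t => S i ∘ Sw S t

/-- The finite word `w|_k = w_1 ⋯ w_k` of an infinite word. -/
def word {N : ℕ} (w : ℕ → Fin N) (k : ℕ) : List (Fin N) :=
  List.ofFn (fun j : Fin k => w j)

/-- Distance between two sets. -/
def setDist {X : Type*} [PseudoMetricSpace X] (A B : Set X) : ℝ :=
  sInf (Set.image2 dist A B)

/-- The word `w` repeated `m` times. -/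
def wrep {N : ℕ} (w : List (Fin N)) (m : ℕ) : List (Fin N) :=
  (List.replicate m w).flatten

/-- The unit vector `(x - ξ)/|x - ξ|`, as a point of the unit sphere. -/
def sphN {d : ℕ} (ξ x : Euc d) (h : x ≠ ξ) : sphere (0 : Euc d) 1 :=
  ⟨‖x - ξ‖⁻¹ • (x - ξ), by
    have hx : x - ξ ≠ 0 := sub_ne_zero.mpr h
    simp [mem_sphere_iff_norm, norm_smul, abs_of_nonneg,
      inv_mul_cancel₀ (norm_ne_zero_iff.mpr hx)]⟩

/-- The starred integral: the integral if the integrand is integrable on the set, else `0`. -/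
def starInt {X : Type*} [MeasurableSpace X] (μ : Measure X) (A : Set X) (g : X → ℝ) : ℝ :=
  @ite _ (IntegrableOn g A μ) (Classical.dec _) (∫ y in A, g y ∂μ) 0

open scoped Pointwise

lemma Sw_append {d N : ℕ} (S : Fin N → Euc d → Euc d) (u v : List (Fin N)) :
    Sw S (u ++ v) = Sw S u ∘ Sw S v := by
  induction u with
  | nil => rfl
  | cons i t ih => simp [Sw, ih, Function.comp_assoc]

lemma wrep_add {N : ℕ} (w : List (Fin N)) (m n : ℕ) :
    wrep w (m + n) = wrep w m ++ wrep w n := by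
  rw [wrep, List.replicate_add, List.flatten_append]; rfl

lemma wrep_succ {N : ℕ} (w : List (Fin N)) (n : ℕ) :
    wrep w (n + 1) = w ++ wrep w n := by
  rw [wrep, List.replicate_succ, List.flatten_cons]; rfl

lemma affRep {d N : ℕ} (q : Fin N → Euc d) (r : Fin N → ℝ)
    (hr : ∀ i, r i ∈ Set.Ioo (0:ℝ) 1)
    (S : Fin N → Euc d → Euc d) (hS : ∀ i x, S i x = q i + r i • x) :
    ∀ u : List (Fin N), ∃ (a : Euc d) (t : ℝ), 0 < t ∧ t ≤ 1 ∧ (u ≠ [] → t < 1) ∧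
      ∀ x, Sw S u x = a + t • x
  | [] => ⟨0, 1, one_pos, le_refl _, by simp, fun x => by simp [Sw]⟩
  | i :: u => by
    obtain ⟨a, t, ht0, ht1, _, hrep⟩ := affRep q r hr S hS u
    obtain ⟨hri0, hri1⟩ := hr i
    refine ⟨q i + r i • a, r i * t, mul_pos hri0 ht0, ?_, fun _ => ?_, fun x => ?_⟩
    · nlinarith
    · nlinarith
    · simp [Sw, Function.comp, hrep, hS, smul_add, mul_smul, add_assoc]

lemma dist_affRep {d : ℕ} (a : Euc d) (t : ℝ) (ht : 0 ≤ t) (x y : Euc d) :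
    dist (a + t • x) (a + t • y) = t * dist x y := by
  rw [dist_eq_norm, dist_eq_norm]
  have : a + t • x - (a + t • y) = t • (x - y) := by module
  rw [this, norm_smul, Real.norm_eq_abs, abs_of_nonneg ht]

lemma diam_affImg {d : ℕ} (a : Euc d) (t : ℝ) (ht : 0 ≤ t) (s : Set (Euc d)) :
    diam ((fun x => a + t • x) '' s) = t * diam s := by
  have h1 : (fun x => a + t • x) '' s = (fun y => a + y) '' (t • s) := by
    rw [← Set.image_smul, Set.image_image]
  rw [h1, (Isometry.of_dist_eq fun x y => dist_add_left a x y).diam_image,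
    diam_smul₀, Real.norm_eq_abs, abs_of_nonneg ht]

lemma frontier_affImg {d : ℕ} (a : Euc d) (t : ℝ) (ht : 0 < t) (s : Set (Euc d)) :
    frontier ((fun x => a + t • x) '' s) = (fun x => a + t • x) '' frontier s := by
  have h := ((Homeomorph.smulOfNeZero t ht.ne').trans
    (Homeomorph.addLeft a)).image_frontier s
  simpa [Homeomorph.trans, Homeomorph.smulOfNeZero, Function.comp] using h.symm

lemma le_setDist_aux {E : Type*} [PseudoMetricSpace E] {f g : E → E} {t c : ℝ}
    (ht : 0 ≤ t) (hfd : ∀ x y, dist (f x) (f y) = t * dist x y)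
    {A B : Set E} (hA : A.Nonempty) (hB : B.Nonempty)
    (h : ∀ x ∈ A, ∀ y ∈ B, c ≤ dist (g x) y) :
    t * c ≤ setDist (f '' (g '' A)) (f '' B) := by
  apply le_csInf (Set.Nonempty.image2 ((hA.image g).image f) (hB.image f))
  rintro b ⟨p, hp, y2, hy2, rfl⟩
  obtain ⟨p', hp', rfl⟩ := hp
  obtain ⟨x, hx, rfl⟩ := hp'
  obtain ⟨y, hy, rfl⟩ := hy2
  rw [hfd]
  exact mul_le_mul_of_nonneg_left (h x hx y hy) ht

lemma setDist_nonneg {E : Type*} [PseudoMetricSpace E] (A B : Set E) :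
    0 ≤ setDist A B :=
  Real.sInf_nonneg fun b hbm => by
    obtain ⟨x, hx, y, hy, rfl⟩ := hbm; exact dist_nonneg

set_option maxHeartbeats 1000000 in
/-- For a rotation-free similarity IFS on `ℝ^d` satisfying the SOSC with open
set `O`, and a nonempty word `w` whose fixed point lies in `O`, with `X = closure O`, there exist
`n₀ ∈ ℕ` and `c₀ > 0` with `dist(S_{w^{m+n₀}}(X), ∂S_{w^m}(X)) ≥ c₀·diam(S_{w^m}(X))` for all
`m ≥ 0`. -/
theorem stmt18
    {d N : ℕ} (hd : 1 ≤ d) (hN : 2 ≤ N)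
    (q : Fin N → Euc d) (r : Fin N → ℝ) (hr : ∀ i, r i ∈ Set.Ioo (0:ℝ) 1)
    (S : Fin N → Euc d → Euc d) (hS : ∀ i x, S i x = q i + r i • x)
    (C : Set (Euc d)) (hCne : C.Nonempty) (hCcomp : IsCompact C)
    (hCinv : C = ⋃ i, S i '' C)
    (O : Set (Euc d)) (hOop : IsOpen O) (hOne : O.Nonempty)
    (hOsub : ∀ i, S i '' O ⊆ O)
    (hOdisj : ∀ i j, i ≠ j → Disjoint (S i '' O) (S j '' O))
    (hSOSC : (O ∩ C).Nonempty)
    (w : List (Fin N)) (hwne : w ≠ []) (xw : Euc d) (hxw : Sw S w xw = xw)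
    (hxwO : xw ∈ O) :
    ∃ (n₀ : ℕ) (c₀ : ℝ), 0 < c₀ ∧ ∀ m : ℕ,
      c₀ * diam (Sw S (wrep w m) '' closure O) ≤
        setDist (Sw S (wrep w (m + n₀)) '' closure O)
          (frontier (Sw S (wrep w m) '' closure O)) := by
  classical
  have hXne : (closure O).Nonempty := hOne.closure
  by_cases hb : Bornology.IsBounded (closure O)
  · -- bounded case
    obtain ⟨aw, tw, htw0, htw1le, htwlt, hwrep⟩ := affRep q r hr S hS w
    have htw1 : tw < 1 := htwlt hwne
    have hdw : ∀ x y, dist (Sw S w x) (Sw S w y) = tw * dist x y := fun x y => by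
      rw [hwrep, hwrep]; exact dist_affRep aw tw htw0.le x y
    have hiter : ∀ n x, dist (Sw S (wrep w n) x) xw ≤ tw ^ n * dist x xw := by
      intro n
      induction n with
      | zero => intro x; simp [wrep, Sw]
      | succ n ih =>
        intro x
        rw [wrep_succ, Sw_append]
        calc dist (Sw S w (Sw S (wrep w n) x)) xw
            = dist (Sw S w (Sw S (wrep w n) x)) (Sw S w xw) := by rw [hxw]
          _ = tw * dist (Sw S (wrep w n) x) xw := hdw _ _
          _ ≤ tw * (tw ^ n * dist x xw) := mul_le_mul_of_nonneg_left (ih x) htw0.le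
          _ = tw ^ (n + 1) * dist x xw := by ring
    obtain ⟨R, hR⟩ := (Metric.isBounded_iff_subset_closedBall xw).mp hb
    have hR0 : 0 ≤ R := by
      have := hR (subset_closure hxwO); simpa using this
    have hOint : O ⊆ interior (closure O) := interior_maximal subset_closure hOop
    have hfr : (frontier (closure O)).Nonempty := by
      rcases Set.eq_empty_or_nonempty (frontier (closure O)) with h | h
      · exfalso
        have hcl : IsClopen (closure O) := isClopen_iff_frontier_eq_empty.mpr h
        have huniv : closure O = Set.univ := hcl.eq_univ hXne
        rw [huniv] at hb
        haveI : Nontrivial (Euc d) :=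
          ⟨EuclideanSpace.single ⟨0, hd⟩ 1, 0, by
            intro hcontra
            have := congrArg (fun v : Euc d => v ⟨0, hd⟩) hcontra
            simp [EuclideanSpace.single] at this⟩
        exact NormedSpace.unbounded_univ ℝ (Euc d) hb
      · exact h
    have hxwnf : xw ∉ frontier (closure O) := fun hmem => hmem.2 (hOint hxwO)
    set δ := infDist xw (frontier (closure O)) with hδ
    have hδ0 : 0 < δ := (IsClosed.notMem_iff_infDist_pos isClosed_frontier hfr).mp hxwnf
    obtain ⟨n₀, hn₀⟩ := exists_pow_lt_of_lt_one
      (show (0:ℝ) < (δ/2)/(R+1) by positivity) htw1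
    have hkey : ∀ x ∈ closure O, ∀ y ∈ frontier (closure O),
        δ/2 ≤ dist (Sw S (wrep w n₀) x) y := by
      intro x hx y hy
      have h1 : dist (Sw S (wrep w n₀) x) xw ≤ tw ^ n₀ * dist x xw := hiter n₀ x
      have h2 : dist x xw ≤ R := hR hx
      have hp0 : (0:ℝ) < tw ^ n₀ := pow_pos htw0 n₀
      have h3 : tw ^ n₀ * dist x xw < δ/2 := by
        have ha : tw ^ n₀ * dist x xw ≤ tw ^ n₀ * (R + 1) := by nlinarith
        have hbb : tw ^ n₀ * (R + 1) < (δ/2)/(R+1) * (R+1) := by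
          have : (0:ℝ) < R + 1 := by linarith
          exact mul_lt_mul_of_pos_right hn₀ this
        have hc : (δ/2)/(R+1) * (R+1) = δ/2 := by field_simp
        linarith
      have h4 : δ ≤ dist xw y := infDist_le_dist_of_mem hy
      have h5 : dist xw y ≤ dist xw (Sw S (wrep w n₀) x) + dist (Sw S (wrep w n₀) x) y :=
        dist_triangle _ _ _
      rw [dist_comm xw (Sw S (wrep w n₀) x)] at h5
      linarith
    set D := diam (closure O) with hD
    have hD0 : 0 ≤ D := diam_nonneg
    refine ⟨n₀, (δ/2)/(D+1), by positivity, fun m => ?_⟩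
    obtain ⟨a, t, ht0, ht1, _, hrep⟩ := affRep q r hr S hS (wrep w m)
    have hf : Sw S (wrep w m) = fun x => a + t • x := funext hrep
    have hdiam : diam (Sw S (wrep w m) '' closure O) = t * D := by
      rw [hf, diam_affImg a t ht0.le]
    have hfront : frontier (Sw S (wrep w m) '' closure O)
        = Sw S (wrep w m) '' frontier (closure O) := by
      rw [hf, frontier_affImg a t ht0]
    have himg : Sw S (wrep w (m + n₀)) '' closure O
        = Sw S (wrep w m) '' (Sw S (wrep w n₀) '' closure O) := by
      rw [wrep_add, Sw_append, Set.image_comp]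
    have hbound : t * (δ/2) ≤ setDist (Sw S (wrep w (m + n₀)) '' closure O)
        (frontier (Sw S (wrep w m) '' closure O)) := by
      rw [himg, hfront]
      exact le_setDist_aux ht0.le
        (fun x y => by rw [hrep x, hrep y]; exact dist_affRep a t ht0.le x y)
        hXne hfr hkey
    rw [hdiam]
    have hfin : (δ/2)/(D+1) * (t * D) ≤ t * (δ/2) := by
      rw [div_mul_eq_mul_div, div_le_iff₀ (by positivity)]
      nlinarith
    linarith
  · -- unbounded case
    refine ⟨0, 1, one_pos, fun m => ?_⟩
    obtain ⟨a, t, ht0, _, _, hrep⟩ := affRep q r hr S hS (wrep w m)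
    have hf : Sw S (wrep w m) = fun x => a + t • x := funext hrep
    have himg : ¬ Bornology.IsBounded (Sw S (wrep w m) '' closure O) := by
      intro hbd
      apply hb
      obtain ⟨R, hR⟩ :=
        (Metric.isBounded_iff_subset_closedBall (Sw S (wrep w m) xw)).mp hbd
      apply (Metric.isBounded_closedBall (x := xw) (r := R / t)).subset
      intro x hx
      have h1 : dist (Sw S (wrep w m) x) (Sw S (wrep w m) xw) ≤ R :=
        hR ⟨x, hx, rfl⟩
      rw [hf, dist_affRep a t ht0.le] at h1
      have : dist x xw ≤ R / t := (le_div_iff₀ ht0).mpr (by linarith [mul_comm t (dist x xw)])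
      exact Metric.mem_closedBall.mpr this
    have hd0 : diam (Sw S (wrep w m) '' closure O) = 0 :=
      Metric.diam_eq_zero_of_unbounded himg
    rw [hd0, mul_zero]
    exact setDist_nonneg _ _
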